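/- For l > 0, the Melkumyan sparse kernel k_l : ℝ → ℝ (defined piecewise as in Equation (10)) is differentiable at d = l with derivative 0: the derivative of the formula ((2 + cos(2πd/l))/3)·(1 − d/l) + sin(2πd/l)/(2π) at d = l equals −(2 + cos 2π)/(3l) + (cos 2π)/l = −1/l + 1/l = 0, matching the derivative of the zero branch, so the truncated kernel is continuously differentiable across the support boundary d = l. -/

import Mathlib

/-!
Written in the normalised variable `t = d / l`, the kernel is `φ (d / l)` on `d ≤ l` with
`φ t = ((2 + cos 2πt) / 3) (1 - t) + sin (2πt) / (2π)`. Since `φ 1 = 0` and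
`φ' t = (2 / 3) (cos 2πt - 1) - (2π / 3) (1 - t) sin 2πt` vanishes at `t = 1`, both branches
of the kernel take the value `0` with slope `0` at `d = l`, and a function glued from two
pieces with equal values and equal derivatives at the gluing point is differentiable there.
-/

open Real Set

/-- The Melkumyan sparse kernel of Equation (10), with effective supportive
range `l`: the trigonometric formula on `d ≤ l` and `0` for `d > l`. -/
noncomputable def melkumyanKernel (l : ℝ) (d : ℝ) : ℝ :=
  if d ≤ l then
    ((2 + Real.cos (2 * Real.pi * d / l)) / 3) * (1 - d / l) +
      Real.sin (2 * Real.pi * d / l) / (2 * Real.pi)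
  else 0

theorem HasDerivAt.ite_le {F : Type*} [NormedAddCommGroup F] [NormedSpace ℝ F]
    {f g : ℝ → F} {f' : F} {a : ℝ} (hf : HasDerivAt f f' a) (hg : HasDerivAt g f' a)
    (hfg : f a = g a) : HasDerivAt (fun x => if x ≤ a then f x else g x) f' a := by
  have hleft : HasDerivWithinAt (fun x => if x ≤ a then f x else g x) f' (Iic a) a :=
    hf.hasDerivWithinAt.congr_of_mem (fun x hx => if_pos hx) self_mem_Iic
  have hright : HasDerivWithinAt (fun x => if x ≤ a then f x else g x) f' (Ici a) a := by
    refine hg.hasDerivWithinAt.congr_of_mem (fun x hx => ?_) self_mem_Ici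
    split_ifs with hxa
    · rw [le_antisymm hxa hx, hfg]
    · rfl
  exact (hleft.union hright).hasDerivAt (by rw [Iic_union_Ici]; exact Filter.univ_mem)

noncomputable def melkumyanProfile (t : ℝ) : ℝ :=
  ((2 + cos (2 * π * t)) / 3) * (1 - t) + sin (2 * π * t) / (2 * π)

theorem melkumyanKernel_eq_ite (l : ℝ) :
    melkumyanKernel l = fun d => if d ≤ l then melkumyanProfile (d / l) else 0 := by
  funext d
  simp only [melkumyanKernel, melkumyanProfile, mul_div_assoc]

theorem melkumyanProfile_one : melkumyanProfile 1 = 0 := by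
  simp [melkumyanProfile]

theorem hasDerivAt_melkumyanProfile (t : ℝ) :
    HasDerivAt melkumyanProfile
      (2 / 3 * (cos (2 * π * t) - 1) - 2 * π / 3 * (1 - t) * sin (2 * π * t)) t := by
  have harg : HasDerivAt (fun t => 2 * π * t) (2 * π) t := by
    simpa using (hasDerivAt_id t).const_mul (2 * π)
  have hfactor : HasDerivAt (fun t => (2 + cos (2 * π * t)) / 3)
      (-sin (2 * π * t) * (2 * π) / 3) t := by
    simpa using (harg.cos.const_add 2).div_const 3
  have hlin : HasDerivAt (fun t : ℝ => 1 - t) (-1) t := by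
    simpa using (hasDerivAt_id t).const_sub 1
  refine ((hfactor.mul hlin).add (harg.sin.div_const (2 * π))).congr_deriv ?_
  field_simp
  ring

theorem hasDerivAt_melkumyanProfile_one : HasDerivAt melkumyanProfile 0 1 := by
  simpa using hasDerivAt_melkumyanProfile 1

/-- The Melkumyan sparse kernel is differentiable at the boundary `d = l` of its
support with derivative `0`, so the truncated kernel is continuously
differentiable across the support boundary. -/
theorem melkumyanKernel_hasDerivAt_boundary (l : ℝ) (hl : 0 < l) :
    HasDerivAt (melkumyanKernel l) 0 l := by
  have hscaled : HasDerivAt (fun d => melkumyanProfile (d / l)) 0 l :=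
    (hasDerivAt_melkumyanProfile_one.comp_of_eq l ((hasDerivAt_id l).div_const l)
      (div_self hl.ne').symm).congr_deriv (zero_mul _)
  rw [melkumyanKernel_eq_ite]
  exact hscaled.ite_le (hasDerivAt_const l 0) (by simp [hl.ne', melkumyanProfile_one])
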